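/- Let A_1, ..., A_m, B_1, ..., B_m, C_1, ..., C_m be subsets of [n] such that |A_i ∩ B_j ∩ C_k| is even if and only if i, j, k are pairwise distinct. Then m ≤ n + 2. -/

import Mathlib

/-!
Fix `A₀`. For `j, k ≠ 0` the set `A₀ ∩ B_j ∩ C_k` has odd size exactly when `j = k`, so the
families `(A₀ ∩ B_j)_{j ≠ 0}` and `(C_k)_{k ≠ 0}` form a Bollobás set pair modulo 2. Over
`𝔽₂` the product of their incidence matrices is then the identity of size `m - 1`, while it
factors through `𝔽₂ⁿ`; hence `m - 1 ≤ n`.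
-/

open Finset Matrix

variable {ι α R : Type*} [Fintype α] [DecidableEq α]

def incidenceMatrix (R : Type*) [Zero R] [One R] (X : ι → Finset α) : Matrix ι α R :=
  Matrix.of fun i x => if x ∈ X i then 1 else 0

theorem incidenceMatrix_mul_transpose [NonAssocSemiring R] (X Y : ι → Finset α) :
    incidenceMatrix R X * (incidenceMatrix R Y)ᵀ = Matrix.of fun i j => ((X i ∩ Y j).card : R) := by
  ext i j
  simp only [incidenceMatrix, mul_apply, transpose_apply, of_apply, ite_zero_mul_ite_zero,
    mul_one, ← mem_inter, sum_boole, filter_mem_eq_inter, univ_inter]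

theorem card_le_of_odd_card_inter_iff_eq [Fintype ι] [DecidableEq ι] (X Y : ι → Finset α)
    (h : ∀ i j, Odd (X i ∩ Y j).card ↔ i = j) :
    Fintype.card ι ≤ Fintype.card α := by
  have hprod_eq_one : incidenceMatrix (ZMod 2) X * (incidenceMatrix (ZMod 2) Y)ᵀ = 1 := by
    rw [incidenceMatrix_mul_transpose]
    ext i j
    by_cases hij : i = j
    · subst hij
      simp [ZMod.natCast_eq_one_iff_odd.mpr ((h i i).mpr rfl)]
    · have heven : Even (X i ∩ Y j).card := Nat.not_odd_iff_even.mp (hij ∘ (h i j).mp)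
      simp [hij, ZMod.natCast_eq_zero_iff_even.mpr heven]
  calc Fintype.card ι = (1 : Matrix ι ι (ZMod 2)).rank := rank_one.symm
    _ ≤ (incidenceMatrix (ZMod 2) X).rank := hprod_eq_one ▸ rank_mul_le_left _ _
    _ ≤ Fintype.card α := rank_le_card_width _

/-- Bollobás set (3,3)-tuples modulo 2 on `[n]` have size at most `n + 2`. -/
theorem bollobas_triple_mod_two_upper (n m : ℕ) (A B C : Fin m → Finset (Fin n))
    (h : ∀ i j k : Fin m,
      Even ((A i ∩ B j ∩ C k).card) ↔ (i ≠ j ∧ j ≠ k ∧ i ≠ k)) :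
    m ≤ n + 2 := by
  cases m with
  | zero => omega
  | succ m =>
    have hpair : ∀ j k : {j : Fin (m + 1) // j ≠ 0},
        Odd (A 0 ∩ B j ∩ C k).card ↔ j = k := by
      rintro ⟨j, hj⟩ ⟨k, hk⟩
      rw [← Nat.not_even_iff_odd, h, Subtype.mk.injEq]
      have h0j := hj.symm
      have h0k := hk.symm
      tauto
    have hcard := card_le_of_odd_card_inter_iff_eq (fun j : {j : Fin (m + 1) // j ≠ 0} => A 0 ∩ B j)
      (fun k => C k) hpair
    simp only [Fintype.card_subtype_compl, Fintype.card_unique, Fintype.card_fin] at hcard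
    omega
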